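/- If x̂ ∈ S is a weak efficient solution of (P) and the local Farkas–Minkowski constraint qualification (LFMCQ) holds at x̂, then there exist ξ = (ξ_1, …, ξ_p) with ξ_i ∈ ∂f_i(x̂) for each i and λ in the unit simplex such that ϑ(x̂, ξ, λ) = 0. -/

import Mathlib

open Set Filter Topology
open scoped RealInnerProductSpace Pointwise

noncomputable section

namespace MOSIP

variable {n : ℕ} {T : Type*} {p : ℕ}

/-- The decision space `ℝ^n`. -/
abbrev Eucl (n : ℕ) := EuclideanSpace ℝ (Fin n)

/-- Subdifferential of a real-valued function. -/
def subdiff (h : Eucl n → ℝ) (x : Eucl n) : Set (Eucl n) :=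
  {ξ | ∀ y, h x + ⟪ξ, y - x⟫ ≤ h y}

/-- Subdifferential of an extended-real-valued function. -/
def subdiffE (h : Eucl n → EReal) (x : Eucl n) : Set (Eucl n) :=
  {ξ | ∀ y, h x + ((⟪ξ, y - x⟫ : ℝ) : EReal) ≤ h y}

/-- Convexity of an extended-real-valued function. -/
def ConvexE (h : Eucl n → EReal) : Prop :=
  ∀ x y : Eucl n, ∀ a b : ℝ, 0 ≤ a → 0 ≤ b → a + b = 1 →
    h (a • x + b • y) ≤ (a : EReal) * h x + (b : EReal) * h y

/-- Proper (with values in `ℝ ∪ {+∞}`): never `−∞` and not identically `+∞`. -/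
def ProperE (h : Eucl n → EReal) : Prop :=
  (∀ x, h x ≠ ⊥) ∧ (∃ x, h x ≠ ⊤)

/-- Feasible set `S` of the problem `(P)`. -/
def feasSet (g : T → Eucl n → EReal) : Set (Eucl n) := {x | ∀ t, g t x ≤ 0}

/-- Active indices `T(x)`. -/
def activeIx (g : T → Eucl n → EReal) (x : Eucl n) : Set T := {t | g t x = 0}

/-- `ε`-active indices `T_ε(x)`. -/
def activeIxEps (g : T → Eucl n → EReal) (x : Eucl n) (ε : ℝ) : Set T :=
  {t | ((-ε : ℝ) : EReal) ≤ g t x}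

/-- `F(xh) = ⋃ i, ∂f_i(xh)`. -/
def FSet (f : Fin p → Eucl n → ℝ) (x : Eucl n) : Set (Eucl n) := ⋃ i, subdiff (f i) x

/-- `G(xh) = ⋃_{t ∈ T(xh)} ∂g_t(xh)`. -/
def GSet (g : T → Eucl n → EReal) (x : Eucl n) : Set (Eucl n) :=
  ⋃ t ∈ activeIx g x, subdiffE (g t) x

/-- The smallest convex cone containing `M` and `0`: all finite nonnegative combinations. -/
def coneHull (M : Set (Eucl n)) : Set (Eucl n) :=
  {x | ∃ (s : Finset (Eucl n)) (c : Eucl n → ℝ), ↑s ⊆ M ∧ (∀ v ∈ s, 0 ≤ c v) ∧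
    x = ∑ v ∈ s, c v • v}

/-- Negative polar cone `M⁰`. -/
def negPolar (M : Set (Eucl n)) : Set (Eucl n) := {d | ∀ ξ ∈ M, ⟪ξ, d⟫ ≤ 0}

/-- Strictly negative polar cone `M⁻`. -/
def strictNegPolar (M : Set (Eucl n)) : Set (Eucl n) := {d | ∀ ξ ∈ M, ⟪ξ, d⟫ < 0}

/-- Contingent (Bouligand tangent) cone of `M` at `x`. -/
def contingentCone (M : Set (Eucl n)) (x : Eucl n) : Set (Eucl n) :=
  {v | ∃ (τ : ℕ → ℝ) (w : ℕ → Eucl n), (∀ r, 0 < τ r) ∧ Tendsto τ atTop (𝓝 0) ∧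
    Tendsto w atTop (𝓝 v) ∧ ∀ r, x + τ r • w r ∈ M}

/-- Normal cone `N(M, x) := C(M, x)⁰`. -/
def normalCone (M : Set (Eucl n)) (x : Eucl n) : Set (Eucl n) :=
  negPolar (contingentCone M x)

/-- Weak efficient solution. -/
def WeakEff (f : Fin p → Eucl n → ℝ) (S : Set (Eucl n)) (xh : Eucl n) : Prop :=
  ¬ ∃ x ∈ S, ∀ i, f i x < f i xh

/-- Efficient solution. -/
def Eff (f : Fin p → Eucl n → ℝ) (S : Set (Eucl n)) (xh : Eucl n) : Prop :=
  ¬ ∃ x ∈ S, (∀ i, f i x ≤ f i xh) ∧ ∃ j, f j x < f j xh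

/-- Isolated efficient solution with constant `ν`:
`max_i (f_i(x) − f_i(xh)) ≥ ν‖x − xh‖` on `S`. -/
def IsolatedEff (f : Fin p → Eucl n → ℝ) (S : Set (Eucl n)) (xh : Eucl n) (ν : ℝ) : Prop :=
  ∀ x ∈ S, ∃ i, ν * ‖x - xh‖ ≤ f i x - f i xh

/-- `w ∈ Σ α_i ∂f_i(xh) + Σ_{t ∈ T*} β_t ∂g_t(xh)` with multipliers as described,
where `Nonneg`/`Pos` refers to the sign condition on the `α_i`. -/
def KKTPoint (f : Fin p → Eucl n → ℝ) (g : T → Eucl n → EReal) (xh : Eucl n)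
    (w : Eucl n) : Prop :=
  ∃ (α : Fin p → ℝ) (Ts : Finset T) (β : T → ℝ) (ξ : Fin p → Eucl n) (ζ : T → Eucl n),
    (∀ i, 0 ≤ α i) ∧ ∑ i, α i = 1 ∧ (∀ t ∈ Ts, t ∈ activeIx g xh) ∧
    (∀ t ∈ Ts, 0 ≤ β t) ∧ (∀ i, ξ i ∈ subdiff (f i) xh) ∧
    (∀ t ∈ Ts, ζ t ∈ subdiffE (g t) xh) ∧
    ∑ i, α i • ξ i + ∑ t ∈ Ts, β t • ζ t = w

/-- The weak KKT condition at `xh`. -/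
def WeakKKT (f : Fin p → Eucl n → ℝ) (g : T → Eucl n → EReal) (xh : Eucl n) : Prop :=
  KKTPoint f g xh 0

/-- The strong KKT condition at `xh` (all objective multipliers positive). -/
def StrongKKT (f : Fin p → Eucl n → ℝ) (g : T → Eucl n → EReal) (xh : Eucl n) : Prop :=
  ∃ (α : Fin p → ℝ) (Ts : Finset T) (β : T → ℝ) (ξ : Fin p → Eucl n) (ζ : T → Eucl n),
    (∀ i, 0 < α i) ∧ ∑ i, α i = 1 ∧ (∀ t ∈ Ts, t ∈ activeIx g xh) ∧
    (∀ t ∈ Ts, 0 ≤ β t) ∧ (∀ i, ξ i ∈ subdiff (f i) xh) ∧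
    (∀ t ∈ Ts, ζ t ∈ subdiffE (g t) xh) ∧
    ∑ i, α i • ξ i + ∑ t ∈ Ts, β t • ζ t = 0

/-- The perturbed KKT condition at `xh` with constant `ν`. -/
def PerturbedKKT (f : Fin p → Eucl n → ℝ) (g : T → Eucl n → EReal) (xh : Eucl n)
    (ν : ℝ) : Prop :=
  ∀ w : Eucl n, ‖w‖ ≤ ν → KKTPoint f g xh w

/-- The gap function `ϑ(x, ξ, λ) = sup_{y ∈ S} Σ_i λ_i ⟪ξ_i, x − y⟫`. -/
def gapFn (S : Set (Eucl n)) (x : Eucl n) (ξ : Fin p → Eucl n) (lam : Fin p → ℝ) : EReal :=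
  ⨆ y ∈ S, ((∑ i, lam i * ⟪ξ i, x - y⟫ : ℝ) : EReal)

/-- The unit simplex of multipliers. -/
def simplex (lam : Fin p → ℝ) : Prop := (∀ i, 0 ≤ lam i) ∧ ∑ i, lam i = 1

/-- Supremum (marginal) function `ψ(x) = sup_t g_t(x)`. -/
def supFn (g : T → Eucl n → EReal) (x : Eucl n) : EReal := ⨆ t, g t x

/-- Directional derivative of a convex extended-real-valued function,
`h'(x; d) = inf_{τ > 0} (h(x + τ d) − h(x))/τ` (the limit as `τ ↓ 0`). -/
def dirDeriv (h : Eucl n → EReal) (x d : Eucl n) : EReal :=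
  ⨅ τ ∈ Ioi (0 : ℝ), (h (x + τ • d) - h x) * ((τ⁻¹ : ℝ) : EReal)

/-- Every constraint is (real-valued and) continuously differentiable around `xh`,
with gradient `gr t` at `xh`. -/
def SmoothConstraintsAt (g : T → Eucl n → EReal) (gr : T → Eucl n) (xh : Eucl n) : Prop :=
  ∀ t, ∃ (h : Eucl n → ℝ) (U : Set (Eucl n)), U ∈ 𝓝 xh ∧ (∀ y ∈ U, g t y = (h y : EReal)) ∧
    ContDiffOn ℝ 1 h U ∧ gradient h xh = gr t

/-- Slater CQ. -/
def SCQ (g : T → Eucl n → EReal) : Prop := ∃ x₀ : Eucl n, ∀ t, g t x₀ < 0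

/-- Mangasarian–Fromovitz CQ at `xh`. -/
def MFCQ (g : T → Eucl n → EReal) (xh : Eucl n) : Prop :=
  (GSet g xh).Nonempty ∧ (strictNegPolar (GSet g xh)).Nonempty

/-- Perturbed Mangasarian–Fromovitz CQ at `xh`. -/
def PMFCQ (g : T → Eucl n → EReal) (xh : Eucl n) : Prop :=
  ∃ xs : Eucl n,
    (⨅ ε ∈ Ioi (0 : ℝ), ⨆ ξ ∈ ⋃ t ∈ activeIxEps g xh ε, subdiffE (g t) xh,
      ((⟪ξ, xs⟫ : ℝ) : EReal)) < 0

/-- Local Farkas–Minkowski CQ at `xh`. -/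
def LFMCQ (g : T → Eucl n → EReal) (xh : Eucl n) : Prop :=
  normalCone (feasSet g) xh = coneHull (GSet g xh)

/-- Closed cone CQ at `xh`. -/
def CCCQ (g : T → Eucl n → EReal) (xh : Eucl n) : Prop :=
  IsClosed (coneHull (GSet g xh))

/-- Abadie CQ at `xh`. -/
def ACQ (g : T → Eucl n → EReal) (xh : Eucl n) : Prop :=
  (GSet g xh).Nonempty ∧ negPolar (GSet g xh) ⊆ contingentCone (feasSet g) xh

/-- Kuhn–Tucker CQ at `xh`. -/
def KTCQ (g : T → Eucl n → EReal) (xh : Eucl n) : Prop :=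
  {d | dirDeriv (supFn g) xh d ≤ 0} ⊆ contingentCone (feasSet g) xh

/-- Pshenichnyi–Levin–Valadier CQ at `xh`. -/
def PLVCQ (g : T → Eucl n → EReal) (xh : Eucl n) : Prop :=
  subdiffE (supFn g) xh ⊆ coneHull (GSet g xh)

/-- Weak Abadie DQ at `xh`. -/
def WADQ (f : Fin p → Eucl n → ℝ) (g : T → Eucl n → EReal) (xh : Eucl n) : Prop :=
  (GSet g xh).Nonempty ∧
    strictNegPolar (FSet f xh) ∩ negPolar (GSet g xh) ⊆ contingentCone (feasSet g) xh

/-- The sublevel sets `Q^i(xh)`. -/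
def QSet (f : Fin p → Eucl n → ℝ) (S : Set (Eucl n)) (xh : Eucl n) (i : Fin p) :
    Set (Eucl n) :=
  {x ∈ S | ∀ l, l ≠ i → f l x ≤ f l xh}

/-- Extended Abadie DQ at `xh`. -/
def EADQ (f : Fin p → Eucl n → ℝ) (g : T → Eucl n → EReal) (xh : Eucl n) : Prop :=
  (GSet g xh).Nonempty ∧
    negPolar (FSet f xh) ∩ negPolar (GSet g xh) ⊆
      ⋂ i, contingentCone (QSet f (feasSet g) xh i) xh

/-- Maeda objective qualification at `xh`. -/
def MOQ (f : Fin p → Eucl n → ℝ) (xh : Eucl n) : Prop :=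
  negPolar (FSet f xh) ⊆ {0} ∪ ⋃ i, strictNegPolar (subdiff (f i) xh)

/-!
Weak efficiency is scalarized by separating the origin from the open convex set of vectors
`r` with `f x - f x̂ < r` for some `x ∈ S`; this gives `λ` in the simplex such that `x̂`
minimizes `∑ λᵢ fᵢ` on `S`. Everything else comes from one separation, of the strict epigraph
of a convex function from the hypograph of a concave one touching it at `x̂`: it yields a
subgradient `w` of `∑ λᵢ fᵢ` at `x̂` with `⟪w, y - x̂⟫ ≥ 0` on `S`, and the sum rule writing
`w = ∑ λᵢ ξᵢ` with `ξᵢ ∈ ∂fᵢ(x̂)`. The gap `ϑ(x̂, ξ, λ) = sup_{y ∈ S} -⟪w, y - x̂⟫` is then `0`.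
-/

section Separation

variable {E : Type*} [NormedAddCommGroup E] [InnerProductSpace ℝ E] [FiniteDimensional ℝ E]

theorem exists_affine_sandwich {F G : E → ℝ} {S : Set E} {x : E}
    (hF : ConvexOn ℝ univ F) (hG : ConcaveOn ℝ S G) (hGF : ∀ y ∈ S, G y ≤ F y)
    (hx : x ∈ S) (hGx : G x = F x) :
    ∃ v : E, (∀ y, F x + ⟪v, y - x⟫ ≤ F y) ∧ ∀ y ∈ S, G y ≤ F x + ⟪v, y - x⟫ := by
  have hopen : IsOpen {q : E × ℝ | q.1 ∈ univ ∧ F q.1 < q.2} := by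
    simpa using isOpen_lt (hF.locallyLipschitz.continuous.comp continuous_fst) continuous_snd
  have hdisj : Disjoint {q : E × ℝ | q.1 ∈ univ ∧ F q.1 < q.2} {q | q.1 ∈ S ∧ q.2 ≤ G q.1} :=
    disjoint_left.2 fun q ⟨_, hFq⟩ ⟨hqS, hqG⟩ => (hFq.trans_le (hqG.trans (hGF _ hqS))).false
  obtain ⟨φ, u, hφF, hφG⟩ :=
    geometric_hahn_banach_open hF.convex_strict_epigraph hopen hG.convex_hypograph hdisj
  set v₀ := (InnerProductSpace.toDual ℝ E).symm (φ.comp (.inl ℝ E ℝ))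
  set s := φ (0, 1)
  have hφ (z : E) (t : ℝ) : φ (z, t) = ⟪v₀, z⟫ + t * s := by
    rw [InnerProductSpace.toDual_symm_apply, ContinuousLinearMap.comp_apply,
      ContinuousLinearMap.inl_apply, ← smul_eq_mul, ← map_smul, ← map_add]
    simp
  have hφF' (z : E) (ε : ℝ) (hε : 0 < ε) : ⟪v₀, z⟫ + (F z + ε) * s < u :=
    hφ z _ ▸ hφF _ ⟨mem_univ z, lt_add_of_pos_right _ hε⟩
  have hux : u ≤ ⟪v₀, x⟫ + F x * s := hGx ▸ hφ x (G x) ▸ hφG _ ⟨hx, le_rfl⟩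
  have hs : s < 0 := by nlinarith [hφF' x 1 one_pos]
  -- the strict epigraph accumulates on the graph of `F`
  have hgraph (z : E) : ⟪v₀, z⟫ + F z * s ≤ u := by
    refine le_of_forall_pos_lt_add fun ε hε => ?_
    have := hφF' z (ε / -s) (div_pos hε (neg_pos.2 hs))
    rw [add_mul, show ε / -s * s = -ε by field_simp [hs.ne]] at this
    linarith
  refine ⟨(-s)⁻¹ • v₀, fun y => ?_, fun y hy => ?_⟩
  · rw [real_inner_smul_left, inner_sub_right, ← le_sub_iff_add_le',
      inv_mul_le_iff₀ (neg_pos.2 hs)]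
    nlinarith [hgraph y]
  · have := hφ y (G y) ▸ hφG _ ⟨hy, le_rfl⟩
    rw [real_inner_smul_left, inner_sub_right, ← sub_le_iff_le_add',
      le_inv_mul_iff₀ (neg_pos.2 hs)]
    nlinarith [hgraph x]

end Separation

section Subdifferential

theorem convexOn_finset_sum {ι E : Type*} [AddCommGroup E] [Module ℝ E] {S : Set E}
    (hS : Convex ℝ S) (s : Finset ι) {f : ι → E → ℝ} (hf : ∀ i ∈ s, ConvexOn ℝ S (f i)) :
    ConvexOn ℝ S (∑ i ∈ s, f i) :=
  Finset.sum_induction _ (ConvexOn ℝ S) (fun _ _ => ConvexOn.add) (convexOn_const 0 hS) hf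

theorem subdiff_nonempty {f : Eucl n → ℝ} (hf : ConvexOn ℝ univ f) (x : Eucl n) :
    (subdiff f x).Nonempty := by
  obtain ⟨v, hv, -⟩ := exists_affine_sandwich hf (concaveOn_const (f x) (convex_singleton x))
    (by rintro y rfl; rfl) rfl rfl
  exact ⟨v, hv⟩

theorem exists_mem_subdiff_inner_nonneg_of_isMinOn {f : Eucl n → ℝ} (hf : ConvexOn ℝ univ f)
    {S : Set (Eucl n)} (hS : Convex ℝ S) {x : Eucl n} (hx : x ∈ S) (hmin : IsMinOn f S x) :
    ∃ w ∈ subdiff f x, ∀ y ∈ S, 0 ≤ ⟪w, y - x⟫ := by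
  obtain ⟨w, hw, hwS⟩ := exists_affine_sandwich hf (concaveOn_const (f x) hS) hmin hx rfl
  exact ⟨w, hw, fun y hy => by linarith [hwS y hy]⟩

theorem subdiff_zero_subset (x : Eucl n) : subdiff 0 x ⊆ 0 := fun w hw => by
  have := hw (x + w)
  simp only [Pi.zero_apply, add_sub_cancel_left, zero_add] at this
  exact real_inner_self_nonpos.1 this

theorem subdiff_add_subset {f g : Eucl n → ℝ} (hf : ConvexOn ℝ univ f)
    (hg : ConvexOn ℝ univ g) (x : Eucl n) : subdiff (f + g) x ⊆ subdiff f x + subdiff g x := by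
  intro w hw
  set G : Eucl n → ℝ := fun y => f x + g x + ⟪w, y - x⟫ - g y
  have hG : ConcaveOn ℝ univ G := by
    have hG_eq : G = (⇑(innerₗ (Eucl n) w) + fun _ => f x + g x - ⟪w, x⟫) - g := by
      ext y
      simp only [G, Pi.add_apply, Pi.sub_apply, innerₗ_apply_apply, inner_sub_right]
      ring
    rw [hG_eq]
    exact (((innerₗ (Eucl n) w).concaveOn convex_univ).add_const _).sub hg
  have hGf (y : Eucl n) : G y ≤ f y := by
    have := hw y
    simp only [G, Pi.add_apply] at this ⊢
    linarith
  obtain ⟨ξ, hξ, hξG⟩ :=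
    exists_affine_sandwich hf hG (fun y _ => hGf y) (mem_univ x) (by simp [G])
  refine ⟨ξ, hξ, w - ξ, fun y => ?_, add_sub_cancel ξ w⟩
  have := hξG y (mem_univ y)
  simp only [G, inner_sub_left] at this ⊢
  linarith

theorem subdiff_finset_sum_subset {ι : Type*} (s : Finset ι) {f : ι → Eucl n → ℝ}
    (hf : ∀ i ∈ s, ConvexOn ℝ univ (f i)) (x : Eucl n) :
    subdiff (∑ i ∈ s, f i) x ⊆ ∑ i ∈ s, subdiff (f i) x := by
  induction s using Finset.cons_induction with
  | empty => simpa using subdiff_zero_subset x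
  | cons a s ha ih =>
    rw [Finset.forall_mem_cons] at hf
    rw [Finset.sum_cons, Finset.sum_cons]
    exact (subdiff_add_subset hf.1 (convexOn_finset_sum convex_univ s hf.2) x).trans
      (add_subset_add_left (ih hf.2))

theorem subdiff_smul_subset {f : Eucl n → ℝ} (hf : ConvexOn ℝ univ f) {c : ℝ} (hc : 0 ≤ c)
    (x : Eucl n) : subdiff (c • f) x ⊆ c • subdiff f x := by
  intro ζ hζ
  rcases hc.eq_or_lt with rfl | hc
  · obtain ⟨ξ, hξ⟩ := subdiff_nonempty hf x
    rw [zero_smul] at hζ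
    exact ⟨ξ, hξ, (zero_smul ℝ ξ).trans (subdiff_zero_subset x hζ).symm⟩
  · refine ⟨c⁻¹ • ζ, fun y => ?_, smul_inv_smul₀ hc.ne' ζ⟩
    have := hζ y
    simp only [Pi.smul_apply, smul_eq_mul] at this
    rw [real_inner_smul_left, ← le_sub_iff_add_le', inv_mul_le_iff₀ hc]
    linarith

end Subdifferential

section Scalarization

variable {ι E : Type*}

def strictUpperImage (f : ι → E → ℝ) (S : Set E) (xh : E) : Set (ι → ℝ) :=
  {r | ∃ x ∈ S, ∀ i, f i x - f i xh < r i}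

theorem isOpen_strictUpperImage [Finite ι] (f : ι → E → ℝ) (S : Set E) (xh : E) :
    IsOpen (strictUpperImage f S xh) := by
  have h : strictUpperImage f S xh = ⋃ x ∈ S, univ.pi fun i => Ioi (f i x - f i xh) := by
    ext r
    simp [strictUpperImage]
  rw [h]
  exact isOpen_biUnion fun x _ => isOpen_set_pi finite_univ fun i _ => isOpen_Ioi

theorem convex_strictUpperImage [AddCommGroup E] [Module ℝ E] {f : ι → E → ℝ} {S : Set E}
    (hS : Convex ℝ S) (hf : ∀ i, ConvexOn ℝ S (f i)) (xh : E) :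
    Convex ℝ (strictUpperImage f S xh) := by
  rintro r ⟨x, hx, hr⟩ r' ⟨x', hx', hr'⟩ a b ha hb hab
  refine ⟨a • x + b • x', hS hx hx' ha hb hab, fun i => ?_⟩
  have hfi := (hf i).2 hx hx' ha hb hab
  have hcomb := convex_Iio (0 : ℝ) (sub_neg.2 (hr i)) (sub_neg.2 (hr' i)) ha hb hab
  have hxh : a * f i xh + b * f i xh = f i xh := by rw [← add_mul, hab, one_mul]
  simp only [smul_eq_mul, mem_Iio, Pi.add_apply, Pi.smul_apply] at hfi hcomb ⊢
  linarith

theorem exists_nonneg_weights_of_weakly_minimal [Fintype ι] [AddCommGroup E] [Module ℝ E]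
    {f : ι → E → ℝ} {S : Set E} (hS : Convex ℝ S) (hf : ∀ i, ConvexOn ℝ S (f i))
    {xh : E} (hxh : xh ∈ S)
    (hweak : ¬ ∃ x ∈ S, ∀ i, f i x < f i xh) :
    ∃ μ : ι → ℝ, (∀ i, 0 ≤ μ i) ∧ 0 < ∑ i, μ i ∧ ∀ x ∈ S, 0 ≤ ∑ i, μ i * (f i x - f i xh) := by
  classical
  set A := strictUpperImage f S xh
  have h0 : (0 : ι → ℝ) ∉ A := fun ⟨x, hx, hlt⟩ => hweak ⟨x, hx, fun i => sub_neg.1 (hlt i)⟩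
  obtain ⟨φ, hφ⟩ := geometric_hahn_banach_open_point (convex_strictUpperImage hS hf xh)
    (isOpen_strictUpperImage f S xh) h0
  simp only [map_zero] at hφ
  set μ : ι → ℝ := fun i => -φ (Pi.single i 1)
  have hφμ (r : ι → ℝ) : φ r = -∑ i, μ i * r i := by
    conv_lhs => rw [pi_eq_sum_univ' r]
    simp [μ, map_sum, mul_comm]
  have hΛ : 0 < ∑ i, μ i := by simpa [hφμ] using hφ 1 ⟨xh, hxh, fun i => by simp⟩
  -- `A` is stable under increasing a coordinate
  have hμ (i : ι) : 0 ≤ μ i := by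
    by_contra! hneg
    set t := (∑ j, μ j) / -μ i
    have ht : 0 ≤ t := div_nonneg hΛ.le (neg_nonneg.2 hneg.le)
    have hmem : 1 + t • Pi.single i 1 ∈ A := by
      refine ⟨xh, hxh, fun j => ?_⟩
      simp only [sub_self, Pi.add_apply, Pi.one_apply, Pi.smul_apply, Pi.single_apply,
        smul_eq_mul, mul_ite, mul_one, mul_zero]
      split_ifs <;> linarith
    have hμt : μ i * t = -∑ j, μ j := by
      rw [mul_div_assoc', div_neg, mul_div_cancel_left₀ _ hneg.ne]
    have := hφ _ hmem
    simp [hφμ, mul_add, Finset.sum_add_distrib, Pi.single_apply, hμt] at this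
  refine ⟨μ, hμ, hΛ, fun x hx => le_of_forall_pos_lt_add fun ε hε => ?_⟩
  have hmem : (fun i => f i x - f i xh + ε / ∑ j, μ j) ∈ A :=
    ⟨x, hx, fun i => lt_add_of_pos_right _ (div_pos hε hΛ)⟩
  have := hφ _ hmem
  simp only [hφμ, mul_add, Finset.sum_add_distrib, ← Finset.sum_mul] at this
  rw [mul_div_cancel₀ _ hΛ.ne'] at this
  linarith

theorem exists_simplex_isMinOn_of_weakly_minimal [Fintype ι] [AddCommGroup E] [Module ℝ E]
    {f : ι → E → ℝ} {S : Set E} (hS : Convex ℝ S) (hf : ∀ i, ConvexOn ℝ S (f i))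
    {xh : E} (hxh : xh ∈ S)
    (hweak : ¬ ∃ x ∈ S, ∀ i, f i x < f i xh) :
    ∃ lam : ι → ℝ, ((∀ i, 0 ≤ lam i) ∧ ∑ i, lam i = 1) ∧ IsMinOn (∑ i, lam i • f i) S xh := by
  obtain ⟨μ, hμ, hΛ, hgap⟩ := exists_nonneg_weights_of_weakly_minimal hS hf hxh hweak
  refine ⟨fun i => μ i / ∑ j, μ j, ⟨fun i => div_nonneg (hμ i) hΛ.le, ?_⟩, fun x hx => ?_⟩
  · rw [← Finset.sum_div, div_self hΛ.ne']
  · have := div_nonneg (hgap x hx) hΛ.le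
    simp only [mem_ofPred_eq, Finset.sum_apply, Pi.smul_apply, smul_eq_mul]
    rw [← sub_nonneg, ← Finset.sum_sub_distrib]
    simpa only [Finset.sum_div, mul_sub, div_mul_eq_mul_div, sub_div] using this

end Scalarization

theorem convex_feasSet {g : T → Eucl n → EReal} (hg : ∀ t, ConvexE (g t)) :
    Convex ℝ (feasSet g) := fun x hx y hy a b ha hb hab t =>
  (hg t x y a b ha hb hab).trans <| add_nonpos
    (EReal.mul_nonpos_iff.2 (.inl ⟨EReal.coe_nonneg.2 ha, hx t⟩))
    (EReal.mul_nonpos_iff.2 (.inl ⟨EReal.coe_nonneg.2 hb, hy t⟩))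

theorem gapFn_eq_zero {S : Set (Eucl n)} {x : Eucl n} (hx : x ∈ S) {ξ : Fin p → Eucl n}
    {lam : Fin p → ℝ} (h : ∀ y ∈ S, 0 ≤ ∑ i, lam i * ⟪ξ i, y - x⟫) : gapFn S x ξ lam = 0 := by
  refine le_antisymm (iSup₂_le fun y hy => EReal.coe_nonpos.2 ?_) (le_iSup₂_of_le x hx (by simp))
  have := h y hy
  simp only [← neg_sub y x, inner_neg_right, mul_neg, Finset.sum_neg_distrib]
  linarith

variable {n p : ℕ} {T : Type*}

theorem stmt6_general
    (f : Fin p → Eucl n → ℝ) (g : T → Eucl n → EReal)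
    (hf : ∀ i, ConvexOn ℝ Set.univ (f i))
    (hgconv : ∀ t, ConvexE (g t))
    (xh : Eucl n) (hxS : xh ∈ feasSet g)
    (hweak : WeakEff f (feasSet g) xh) :
    ∃ (ξ : Fin p → Eucl n) (lam : Fin p → ℝ),
      (∀ i, ξ i ∈ subdiff (f i) xh) ∧ simplex lam ∧
      gapFn (feasSet g) xh ξ lam = 0 := by
  have hS := convex_feasSet hgconv
  obtain ⟨lam, hlam, hmin⟩ := exists_simplex_isMinOn_of_weakly_minimal hS
    (fun i => (hf i).subset (subset_univ _) hS) hxS hweak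
  obtain ⟨w, hw, hwS⟩ := exists_mem_subdiff_inner_nonneg_of_isMinOn
    (convexOn_finset_sum convex_univ _ fun i _ => (hf i).smul (hlam.1 i)) hS hxS hmin
  obtain ⟨ζ, hζ, rfl⟩ := (mem_finsetSum _ _ _).1 <|
    subdiff_finset_sum_subset _ (fun i _ => (hf i).smul (hlam.1 i)) xh hw
  choose ξ hξ hξζ using fun i =>
    subdiff_smul_subset (hf i) (hlam.1 i) xh (hζ (Finset.mem_univ i))
  refine ⟨ξ, lam, hξ, hlam, gapFn_eq_zero hxS fun y hy => ?_⟩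
  simpa [← hξζ, sum_inner, real_inner_smul_left] using hwS y hy

/-- If `x̂ ∈ S` is a weak efficient solution of `(P)` and LFMCQ holds at `x̂`,
then there exist `ξ` with `ξ_i ∈ ∂f_i(x̂)` and `λ` in the unit simplex with `ϑ(x̂, ξ, λ) = 0`. -/
theorem stmt6
    (hn : 1 ≤ n) (hp : 1 ≤ p)
    (f : Fin p → Eucl n → ℝ) (g : T → Eucl n → EReal)
    (hf : ∀ i, ConvexOn ℝ Set.univ (f i))
    (hgconv : ∀ t, ConvexE (g t))
    (hgproper : ∀ t, ProperE (g t))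
    (hglsc : ∀ t, LowerSemicontinuous (g t))
    (xh : Eucl n) (hxS : xh ∈ feasSet g)
    (hweak : WeakEff f (feasSet g) xh)
    (hlfm : LFMCQ g xh) :
    ∃ (ξ : Fin p → Eucl n) (lam : Fin p → ℝ),
      (∀ i, ξ i ∈ subdiff (f i) xh) ∧ simplex lam ∧
      gapFn (feasSet g) xh ξ lam = 0 :=
  stmt6_general f g hf hgconv xh hxS hweak

end MOSIP
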